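/- (Lemma 5.4) Let a_1,…,a_k ∈ S, let α = (a_1,…,a_{k-1}) ∈ L_1 and β = (a_2,…,a_k) ∈ L_{k+1}, and let P be a directed path in G from α to β that contains neither u, nor v, nor any ba-type back edge. Fix i with 2 ≤ i ≤ k (P visits L_i by the layer observation), and let γ_1 and γ_2 be the first and last vertices of L_i that P visits; let P_1 be the subpath of P from α to γ_1 and P_2 the subpath of P from γ_2 to β. If P_1 does not visit B, then γ_1 has the vector prefix (a_1,…,a_{k-i}). If P_2 does not visit A, then γ_2 has the suffix (a_{k-i+3},…,a_k,x) for some coordinate array x. -/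

import Mathlib

namespace DiamLB

/-! ## Generic directed-graph notions -/

/-- There is a directed walk of length `n` from `a` to `b`. -/
def HasWalkLen {V : Type*} (Adj : V → V → Prop) : ℕ → V → V → Prop
  | 0, a, b => a = b
  | n + 1, a, b => ∃ c, Adj a c ∧ HasWalkLen Adj n c b

/-- `P 0, P 1, …, P n` is a directed walk. -/
def IsWalk {V : Type*} (Adj : V → V → Prop) (P : ℕ → V) (n : ℕ) : Prop :=
  ∀ t, t < n → Adj (P t) (P (t + 1))

/-- The shortest-path distance from `a` to `b` is at most `m`. -/
def DistLE {V : Type*} (Adj : V → V → Prop) (a b : V) (m : ℕ) : Prop :=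
  ∃ n ≤ m, HasWalkLen Adj n a b

/-! ## The construction (Section 3, `k ≥ 5`) -/

/-- Boolean vectors of length `d`, i.e. elements of `{0,1}^d`. -/
abbrev Vec (d : ℕ) := Fin d → Bool

/-- The all-ones vector. -/
def ones (d : ℕ) : Vec d := fun _ => true

/-- Tags naming the layers of the construction. -/
inductive Tag : Type
  | L (i : ℕ)
  | L' (i : ℕ)
  | A (i : ℕ)
  | B (i : ℕ)

/-- Potential vertices of the construction: a tagged partial tuple of vectors
(position `j : Fin k` holding the vector with 1-based index `j+1`) together with a
coordinate array `x` (1-based entry `x_ℓ` at position `ℓ-1 : Fin (k-1)`), plus the two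
special vertices `uu` (the vertex `u`) and `vv` (the vertex `v`).  Vertices carrying no
coordinate array in the paper are modelled with the all-zero coordinate array. -/
inductive Vert (k d : ℕ) : Type
  | node (tag : Tag) (p : Fin k → Option (Vec d)) (x : Fin (k - 1) → Fin d) : Vert k d
  | uu : Vert k d
  | vv : Vert k d

/-- The positions (0-based) satisfying `F` are filled by vectors of `S`, and the other
positions are empty. -/
def FillsS (k d : ℕ) (S : Finset (Vec d)) (F : ℕ → Prop) (p : Fin k → Option (Vec d)) :
    Prop :=
  ∀ j : Fin k, (F (j : ℕ) → ∃ a ∈ S, p j = some a) ∧ (¬ F (j : ℕ) → p j = none)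

/-- The dummy (all-zero) coordinate array, used for vertices that carry no coordinate
array in the paper. -/
def ZeroX (k d : ℕ) (x : Fin (k - 1) → Fin d) : Prop :=
  ∀ ℓ, (x ℓ : ℕ) = 0

/-- The compatibility condition between the vector tuple and the coordinate array of a
vertex of `L_i` (Table 1): for `1 ≤ j ≤ k-i` (the `a_j`), `a_j[x_ℓ] = 1` for all
`1 ≤ ℓ ≤ k-j`, and for `k-i+3 ≤ j ≤ k` (the `b_j`), `b_j[x_ℓ] = 1` for all
`k-j+1 ≤ ℓ ≤ k-1`.  (Everything is 0-based here: position `j` holds the vector with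
1-based index `j+1`, and `x ℓ` is the 1-based coordinate `x_{ℓ+1}`.) -/
def BitCond (k d : ℕ) (i : ℕ) (p : Fin k → Option (Vec d)) (x : Fin (k - 1) → Fin d) :
    Prop :=
  (∀ j : Fin k, (j : ℕ) < k - i → ∀ w, p j = some w →
    ∀ ℓ : Fin (k - 1), (ℓ : ℕ) < k - ((j : ℕ) + 1) → w (x ℓ) = true) ∧
  (∀ j : Fin k, k - i + 2 ≤ (j : ℕ) → ∀ w, p j = some w →
    ∀ ℓ : Fin (k - 1), k - ((j : ℕ) + 1) ≤ (ℓ : ℕ) → w (x ℓ) = true)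

/-- The layer `L_i`, for `i = 1, …, k+1`. -/
def setL (k d : ℕ) (S : Finset (Vec d)) (i : ℕ) : Set (Vert k d) :=
  { w | ∃ p x, w = Vert.node (Tag.L i) p x ∧
      ((i = 1 ∧ FillsS k d S (fun j => j < k - 1) p ∧ ZeroX k d x) ∨
       (i = k + 1 ∧ FillsS k d S (fun j => 1 ≤ j) p ∧ ZeroX k d x) ∨
       (2 ≤ i ∧ i ≤ k ∧ FillsS k d S (fun j => j < k - i ∨ k - i + 2 ≤ j) p ∧
         BitCond k d i p x)) }

/-- The layer `L'_i`, for `i = 3, …, k-1`: same vector tuples as `L_i` but with an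
arbitrary coordinate array. -/
def setL' (k d : ℕ) (S : Finset (Vec d)) (i : ℕ) : Set (Vert k d) :=
  { w | ∃ p x, w = Vert.node (Tag.L' i) p x ∧ 3 ≤ i ∧ i ≤ k - 1 ∧
      FillsS k d S (fun j => j < k - i ∨ k - i + 2 ≤ j) p }

/-- The set `A_i`, for `i = 4, …, k-1`: tuples `(a_1, …, a_{k-i})`. -/
def setA (k d : ℕ) (S : Finset (Vec d)) (i : ℕ) : Set (Vert k d) :=
  { w | ∃ p x, w = Vert.node (Tag.A i) p x ∧ 4 ≤ i ∧ i ≤ k - 1 ∧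
      FillsS k d S (fun j => j < k - i) p ∧ ZeroX k d x }

/-- The set `B_i`, for `i = 3, …, k-2`: tuples `(b_{k-i+3}, …, b_k)`. -/
def setB (k d : ℕ) (S : Finset (Vec d)) (i : ℕ) : Set (Vert k d) :=
  { w | ∃ p x, w = Vert.node (Tag.B i) p x ∧ 3 ≤ i ∧ i ≤ k - 2 ∧
      FillsS k d S (fun j => k - i + 2 ≤ j) p ∧ ZeroX k d x }

/-- `L = ∪_i L_i`. -/
def setLall (k d : ℕ) (S : Finset (Vec d)) : Set (Vert k d) := ⋃ i, setL k d S i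

/-- `L' = ∪_i L'_i`. -/
def setL'all (k d : ℕ) (S : Finset (Vec d)) : Set (Vert k d) := ⋃ i, setL' k d S i

/-- `A = ∪_i A_i`. -/
def setAall (k d : ℕ) (S : Finset (Vec d)) : Set (Vert k d) := ⋃ i, setA k d S i

/-- `B = ∪_i B_i`. -/
def setBall (k d : ℕ) (S : Finset (Vec d)) : Set (Vert k d) := ⋃ i, setB k d S i

/-- Level `i` is `L_i ∪ L'_i ∪ A_i ∪ B_i`. -/
def level (k d : ℕ) (S : Finset (Vec d)) (i : ℕ) : Set (Vert k d) :=
  setL k d S i ∪ setL' k d S i ∪ setA k d S i ∪ setB k d S i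

/-- The vertex set of the graph `G`. -/
def VertexSet (k d : ℕ) (S : Finset (Vec d)) : Set (Vert k d) :=
  setLall k d S ∪ setL'all k d S ∪ setAall k d S ∪ setBall k d S ∪ {Vert.uu, Vert.vv}

/-! ### Edges -/

/-- One orientation of the (undirected) swap edges.  Between `L_i` and `L_{i+1}`
(`2 ≤ i ≤ k-1`) the vector `a_{k-i}` (0-based position `k-i-1`) is exchanged for the
vector `b_{k-i+2}` (0-based position `k-i+1`), keeping the coordinate array; between
`L_1` and `L_2` the vector `a_{k-1}` is exchanged for a coordinate array; between
`L_{k+1}` and `L_k` the vector `b_2` is exchanged for a coordinate array. -/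
def SwapE (k d : ℕ) (S : Finset (Vec d)) (α β : Vert k d) : Prop :=
  (∃ i p x p' x', 2 ≤ i ∧ i ≤ k - 1 ∧
      α = Vert.node (Tag.L i) p x ∧ β = Vert.node (Tag.L (i + 1)) p' x' ∧
      α ∈ setL k d S i ∧ β ∈ setL k d S (i + 1) ∧ x' = x ∧
      (∀ j : Fin k, (j : ℕ) ≠ k - i - 1 → (j : ℕ) ≠ k - i + 1 → p' j = p j)) ∨
  (∃ p x p' x',
      α = Vert.node (Tag.L 1) p x ∧ β = Vert.node (Tag.L 2) p' x' ∧
      α ∈ setL k d S 1 ∧ β ∈ setL k d S 2 ∧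
      (∀ j : Fin k, (j : ℕ) ≠ k - 2 → p' j = p j)) ∨
  (∃ p x p' x',
      α = Vert.node (Tag.L (k + 1)) p x ∧ β = Vert.node (Tag.L k) p' x' ∧
      α ∈ setL k d S (k + 1) ∧ β ∈ setL k d S k ∧
      (∀ j : Fin k, (j : ℕ) ≠ 1 → p' j = p j))

/-- One orientation of the (undirected) vector-change edges between `L_i` and `L'_i`
(`3 ≤ i ≤ k-1`): same coordinate array, same vectors except possibly one of `a_{k-i}`
(position `k-i-1`) or `b_{k-i+3}` (position `k-i+2`). -/
def VecE (k d : ℕ) (S : Finset (Vec d)) (α β : Vert k d) : Prop :=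
  ∃ i p x p' x', 3 ≤ i ∧ i ≤ k - 1 ∧
    α = Vert.node (Tag.L i) p x ∧ β = Vert.node (Tag.L' i) p' x' ∧
    α ∈ setL k d S i ∧ β ∈ setL' k d S i ∧ x' = x ∧
    ((∀ j : Fin k, (j : ℕ) ≠ k - i - 1 → p' j = p j) ∨
     (∀ j : Fin k, (j : ℕ) ≠ k - i + 2 → p' j = p j))

/-- The (undirected, symmetric as stated) coordinate-change edges: two distinct
vertices with the same vector tuple, within each `L'_i`, between `L'_i` and `L_i`,
within `L_2` and within `L_k`. -/
def CoordE (k d : ℕ) (S : Finset (Vec d)) (α β : Vert k d) : Prop :=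
  ∃ t t' p x x', α = Vert.node t p x ∧ β = Vert.node t' p x' ∧ α ≠ β ∧
    ((∃ i, α ∈ setL' k d S i ∧ β ∈ setL' k d S i) ∨
     (∃ i, α ∈ setL' k d S i ∧ β ∈ setL k d S i) ∨
     (∃ i, α ∈ setL k d S i ∧ β ∈ setL' k d S i) ∨
     (α ∈ setL k d S 2 ∧ β ∈ setL k d S 2) ∨
     (α ∈ setL k d S k ∧ β ∈ setL k d S k))

/-- The directed `a`-type back edges: from `L_i ∪ L'_i` to the matching prefix in `A_i`;
from `A_i` to every vertex of `L'_4` with the matching prefix; and from `A_{k-1}`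
to every vertex of `A_i` with the same first vector `a_1`. -/
def ABack (k d : ℕ) (S : Finset (Vec d)) (α β : Vert k d) : Prop :=
  (∃ i t p x p' x', (α ∈ setL k d S i ∨ α ∈ setL' k d S i) ∧ β ∈ setA k d S i ∧
      α = Vert.node t p x ∧ β = Vert.node (Tag.A i) p' x' ∧
      (∀ j : Fin k, (j : ℕ) < k - i → p' j = p j)) ∨
  (∃ i p x p' x', α ∈ setA k d S i ∧ β ∈ setL' k d S 4 ∧
      α = Vert.node (Tag.A i) p x ∧ β = Vert.node (Tag.L' 4) p' x' ∧
      (∀ j : Fin k, (j : ℕ) < k - i → p' j = p j)) ∨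
  (∃ i p x p' x', α ∈ setA k d S (k - 1) ∧ β ∈ setA k d S i ∧
      α = Vert.node (Tag.A (k - 1)) p x ∧ β = Vert.node (Tag.A i) p' x' ∧
      (∀ j : Fin k, (j : ℕ) = 0 → p' j = p j))

/-- The directed `b`-type back edges: from `B_i` to every vertex of `L_i ∪ L'_i` with
the matching suffix; from every vertex of `L'_{k-2}` to the vertex of `B_i` with the
matching suffix; and from `B_i` to the vertex of `B_3` with the same last vector. -/
def BBack (k d : ℕ) (S : Finset (Vec d)) (α β : Vert k d) : Prop :=
  (∃ i t p x p' x', α ∈ setB k d S i ∧ (β ∈ setL k d S i ∨ β ∈ setL' k d S i) ∧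
      α = Vert.node (Tag.B i) p x ∧ β = Vert.node t p' x' ∧
      (∀ j : Fin k, k - i + 2 ≤ (j : ℕ) → p j = p' j)) ∨
  (∃ i p x p' x', α ∈ setL' k d S (k - 2) ∧ β ∈ setB k d S i ∧
      α = Vert.node (Tag.L' (k - 2)) p x ∧ β = Vert.node (Tag.B i) p' x' ∧
      (∀ j : Fin k, k - i + 2 ≤ (j : ℕ) → p' j = p j)) ∨
  (∃ i p x p' x', α ∈ setB k d S i ∧ β ∈ setB k d S 3 ∧
      α = Vert.node (Tag.B i) p x ∧ β = Vert.node (Tag.B 3) p' x' ∧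
      (∀ j : Fin k, (j : ℕ) = k - 1 → p' j = p j))

/-- The directed `ba`-type back edges: from every vertex of `B_i` to every vertex of
`A_i`, for `4 ≤ i ≤ k-2`. -/
def BABack (k d : ℕ) (S : Finset (Vec d)) (α β : Vert k d) : Prop :=
  ∃ i, 4 ≤ i ∧ i ≤ k - 2 ∧ α ∈ setB k d S i ∧ β ∈ setA k d S i

/-- The directed fixed edges: `L'_{k-2} → v`, `v → L_1 ∪ L_2`, `L_k ∪ L_{k+1} → u`,
and `u → L'_4`. -/
def FixedE (k d : ℕ) (S : Finset (Vec d)) (α β : Vert k d) : Prop :=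
  (α ∈ setL' k d S (k - 2) ∧ β = Vert.vv) ∨
  (α = Vert.vv ∧ (β ∈ setL k d S 1 ∨ β ∈ setL k d S 2)) ∨
  ((α ∈ setL k d S k ∨ α ∈ setL k d S (k + 1)) ∧ β = Vert.uu) ∨
  (α = Vert.uu ∧ β ∈ setL' k d S 4)

/-- The adjacency relation of the graph `G` (undirected edges appear in both
directions). -/
def Adj (k d : ℕ) (S : Finset (Vec d)) (α β : Vert k d) : Prop :=
  SwapE k d S α β ∨ SwapE k d S β α ∨ VecE k d S α β ∨ VecE k d S β α ∨
  CoordE k d S α β ∨ ABack k d S α β ∨ BBack k d S α β ∨ BABack k d S α β ∨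
  FixedE k d S α β

/-! ### Loops and covers (Section 5) -/

/-- `t` is the first time at which the walk `P` (of length `n`) visits `L_i`. -/
def FirstVisit (k d : ℕ) (S : Finset (Vec d)) (P : ℕ → Vert k d) (n i t : ℕ) : Prop :=
  t ≤ n ∧ P t ∈ setL k d S i ∧ ∀ s, s < t → P s ∉ setL k d S i

/-- `t` is the last time at which the walk `P` (of length `n`) visits `L_i`. -/
def LastVisit (k d : ℕ) (S : Finset (Vec d)) (P : ℕ → Vert k d) (n i t : ℕ) : Prop :=
  t ≤ n ∧ P t ∈ setL k d S i ∧ ∀ s, t < s → s ≤ n → P s ∉ setL k d S i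

/-- The layer `L_i` is in a loop: the walk `P` visits `L_i` at least twice. -/
def InLoop (k d : ℕ) (S : Finset (Vec d)) (P : ℕ → Vert k d) (n i : ℕ) : Prop :=
  ∃ t1 t2, t1 < t2 ∧ t2 ≤ n ∧ P t1 ∈ setL k d S i ∧ P t2 ∈ setL k d S i

/-- The walk `P` visits `A`. -/
def VisitsA (k d : ℕ) (S : Finset (Vec d)) (P : ℕ → Vert k d) (n : ℕ) : Prop :=
  ∃ t ≤ n, P t ∈ setAall k d S

/-- The walk `P` visits `B`. -/
def VisitsB (k d : ℕ) (S : Finset (Vec d)) (P : ℕ → Vert k d) (n : ℕ) : Prop :=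
  ∃ t ≤ n, P t ∈ setBall k d S

/-- The layer `L_i` covers the layer `L_m` (with respect to the walk `P` of length `n`):
for `3 ≤ i ≤ k-1`, `L_i` covers `L_{i-1}` if `L_{i-1}` is not in a loop, `L_i` is in a
loop, and the first and last vertices of `P` in `L_i` differ in the vector `b_{k-i+3}`
(0-based position `k-i+2`) and in the coordinate array; symmetrically `L_i` covers
`L_{i+1}` using the vector `a_{k-i}` (0-based position `k-i-1`).  Additionally `L_4`
covers both `L_3` and `L_2` if `P` visits `A`, and `L_{k-2}` covers both `L_{k-1}` and
`L_k` if `P` visits `B`. -/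
def Covers (k d : ℕ) (S : Finset (Vec d)) (P : ℕ → Vert k d) (n : ℕ) (i m : ℕ) : Prop :=
  (3 ≤ i ∧ i ≤ k - 1 ∧ m + 1 = i ∧ ¬ InLoop k d S P n m ∧ InLoop k d S P n i ∧
    ∃ t1 t2 p1 x1 p2 x2, FirstVisit k d S P n i t1 ∧ LastVisit k d S P n i t2 ∧
      P t1 = Vert.node (Tag.L i) p1 x1 ∧ P t2 = Vert.node (Tag.L i) p2 x2 ∧
      (∀ j : Fin k, (j : ℕ) = k - i + 2 → p1 j ≠ p2 j) ∧ x1 ≠ x2) ∨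
  (3 ≤ i ∧ i ≤ k - 1 ∧ m = i + 1 ∧ ¬ InLoop k d S P n m ∧ InLoop k d S P n i ∧
    ∃ t1 t2 p1 x1 p2 x2, FirstVisit k d S P n i t1 ∧ LastVisit k d S P n i t2 ∧
      P t1 = Vert.node (Tag.L i) p1 x1 ∧ P t2 = Vert.node (Tag.L i) p2 x2 ∧
      (∀ j : Fin k, (j : ℕ) = k - i - 1 → p1 j ≠ p2 j) ∧ x1 ≠ x2) ∨
  (i = 4 ∧ (m = 3 ∨ m = 2) ∧ VisitsA k d S P n) ∨
  (i = k - 2 ∧ (m = k - 1 ∨ m = k) ∧ VisitsB k d S P n)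


/-! Before its first visit to `L_i`, a path that avoids `B`, `u` and `v` stays at levels
below `i`: no edge between the remaining vertices raises the level by more than one, and the
only edges raising it at all are swap edges into `L`. An edge leaving level `m` never touches
the vectors `a_1, …, a_{k-m-1}`, so the prefix `a_1, …, a_{k-i}` of `α` is carried to `γ₁`.
Read backwards from `β`, a path that avoids `A`, `u` and `v` after `γ₂` stays above level `i`,
and an edge entering level `m` never touches `a_{k-m+4}, …, a_k`, so the suffix of `β` is
carried back to `γ₂`. -/

theorem first_hit_of_invariant {V : Type*} {P : ℕ → V} {t : ℕ} {R Q : V → Prop} {T : Set V}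
    (h0 : R (P 0)) (hRT : ∀ w, R w → w ∉ T)
    (hstep : ∀ s < t, R (P s) → R (P (s + 1)) ∨ P (s + 1) ∈ T ∧ Q (P (s + 1)))
    (hfirst : ∀ s < t, P s ∉ T) (ht : P t ∈ T) : Q (P t) := by
  have hR : ∀ s < t, R (P s) := by
    intro s
    induction s with
    | zero => exact fun _ => h0
    | succ s ih =>
      intro hs
      exact (hstep s (by omega) (ih (by omega))).resolve_right fun h => hfirst _ hs h.1
  cases t with
  | zero => exact absurd ht (hRT _ h0)
  | succ s =>
    rcases hstep s (by omega) (hR s (by omega)) with h | h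
    · exact absurd ht (hRT _ h)
    · exact h.2

theorem last_hit_of_invariant {V : Type*} {P : ℕ → V} {n t : ℕ} {R Q : V → Prop} {T : Set V}
    (hn : R (P n)) (hRT : ∀ w, R w → w ∉ T)
    (hstep : ∀ s, t ≤ s → s < n → R (P (s + 1)) → R (P s) ∨ P s ∈ T ∧ Q (P s))
    (hlast : ∀ s, t < s → s ≤ n → P s ∉ T) (ht : P t ∈ T) (htn : t ≤ n) : Q (P t) := by
  have hrev := first_hit_of_invariant (P := fun s => P (n - s)) (t := n - t) (Q := Q)
    (by simpa using hn) hRT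
    (fun s hs hR => by
      have hs' : n - (s + 1) + 1 = n - s := by omega
      exact hstep (n - (s + 1)) (by omega) (by omega) (by rwa [hs']))
    (fun s hs => hlast (n - s) (by omega) (by omega)) (by rwa [Nat.sub_sub_self htn])
  rwa [Nat.sub_sub_self htn] at hrev

@[simp]
def Tag.level : Tag → ℕ
  | L i | L' i | A i | B i => i

def KeepsPrefix (k d : ℕ) (S : Finset (Vec d)) (m : ℕ) (p : Fin k → Option (Vec d))
    (β : Vert k d) : Prop :=
  ∃ t' p' x', β = .node t' p' x' ∧ (t'.level ≤ m ∨ β ∈ setL k d S (m + 1)) ∧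
    ∀ j : Fin k, (j : ℕ) + m + 1 < k → p' j = p j

/-- The bound `k + 3 ≤ j + m` is kept free of subtraction: for `m = k + 1` the truncated
`k - m + 3 ≤ j` would lose position `2`. -/
def KeepsSuffix (k d : ℕ) (S : Finset (Vec d)) (m : ℕ) (p : Fin k → Option (Vec d))
    (α : Vert k d) : Prop :=
  ∃ t' p' x', α = .node t' p' x' ∧ (m ≤ t'.level ∨ α ∈ setL k d S (m - 1)) ∧
    ∀ j : Fin k, k + 3 ≤ (j : ℕ) + m → p' j = p j

section Edges

variable {k d : ℕ} {S : Finset (Vec d)} {i : ℕ} {t : Tag} {p : Fin k → Option (Vec d)}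
  {x : Fin (k - 1) → Fin d} {α β : Vert k d}

lemma eq_L_of_node_mem_setL (h : Vert.node t p x ∈ setL k d S i) : t = .L i := by
  obtain ⟨_, _, h, -⟩ := h
  exact (Vert.node.inj h).1

lemma level_eq_of_node_mem_setL (h : Vert.node t p x ∈ setL k d S i) : t.level = i := by
  simp [eq_L_of_node_mem_setL h]

lemma level_eq_of_node_mem_setL' (h : Vert.node t p x ∈ setL' k d S i) : t.level = i := by
  obtain ⟨_, _, h, -⟩ := h
  simp [(Vert.node.inj h).1]

lemma bounds_of_mem_setA (h : α ∈ setA k d S i) : 4 ≤ i ∧ i ≤ k - 1 := by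
  obtain ⟨_, _, -, h4, hk, -⟩ := h
  exact ⟨h4, hk⟩

lemma bounds_of_mem_setB (h : α ∈ setB k d S i) : 3 ≤ i ∧ i ≤ k - 2 := by
  obtain ⟨_, _, -, h3, hk, -⟩ := h
  exact ⟨h3, hk⟩

lemma CoordE.exists_level_eq (h : CoordE k d S α β) :
    ∃ t t' p x x', α = .node t p x ∧ β = .node t' p x' ∧ t'.level = t.level := by
  obtain ⟨t, t', p, x, x', rfl, rfl, -, hmem⟩ := h
  refine ⟨t, t', p, x, x', rfl, rfl, ?_⟩
  rcases hmem with ⟨j, h₁, h₂⟩ | ⟨j, h₁, h₂⟩ | ⟨j, h₁, h₂⟩ | ⟨h₁, h₂⟩ | ⟨h₁, h₂⟩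
  · rw [level_eq_of_node_mem_setL' h₁, level_eq_of_node_mem_setL' h₂]
  · rw [level_eq_of_node_mem_setL' h₁, level_eq_of_node_mem_setL h₂]
  · rw [level_eq_of_node_mem_setL h₁, level_eq_of_node_mem_setL' h₂]
  all_goals rw [level_eq_of_node_mem_setL h₁, level_eq_of_node_mem_setL h₂]

lemma ABack.mem_setAall (h : ABack k d S α β) : α ∈ setAall k d S ∨ β ∈ setAall k d S := by
  rcases h with ⟨j, -, -, -, -, -, -, hβ, -⟩ | ⟨j, -, -, -, -, hα, -⟩ | ⟨j, -, -, -, -, hα, -⟩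
  · exact .inr (Set.mem_iUnion.2 ⟨j, hβ⟩)
  · exact .inl (Set.mem_iUnion.2 ⟨j, hα⟩)
  · exact .inl (Set.mem_iUnion.2 ⟨k - 1, hα⟩)

lemma BBack.mem_setBall (h : BBack k d S α β) : α ∈ setBall k d S ∨ β ∈ setBall k d S := by
  rcases h with ⟨j, -, -, -, -, -, hα, -⟩ | ⟨j, -, -, -, -, -, hβ, -⟩ | ⟨j, -, -, -, -, hα, -⟩
  · exact .inl (Set.mem_iUnion.2 ⟨j, hα⟩)
  · exact .inr (Set.mem_iUnion.2 ⟨j, hβ⟩)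
  · exact .inl (Set.mem_iUnion.2 ⟨j, hα⟩)

lemma FixedE.incident_uu_or_vv (h : FixedE k d S α β) :
    α = .uu ∨ α = .vv ∨ β = .uu ∨ β = .vv := by
  rcases h with ⟨-, h⟩ | ⟨h, -⟩ | ⟨-, h⟩ | ⟨h, -⟩ <;> simp [h]

lemma SwapE.keepsPrefix (h : SwapE k d S (.node t p x) β) :
    KeepsPrefix k d S t.level p β := by
  rcases h with ⟨j, p₁, x₁, p₂, x₂, -, -, hα, rfl, -, hβ, -, hkeep⟩ |
    ⟨p₁, x₁, p₂, x₂, hα, rfl, -, hβ, hkeep⟩ | ⟨p₁, x₁, p₂, x₂, hα, rfl, -, -, -⟩ <;>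
    obtain ⟨rfl, rfl, rfl⟩ := Vert.node.inj hα <;> simp only [Tag.level]
  · exact ⟨_, _, _, rfl, .inr hβ, fun l hl => hkeep l (by omega) (by omega)⟩
  · exact ⟨_, _, _, rfl, .inr hβ, fun l hl => hkeep l (by omega)⟩
  · exact ⟨_, _, _, rfl, .inl (by simp), fun l hl => by omega⟩

lemma SwapE.keepsPrefix_symm (h : SwapE k d S β (.node t p x)) :
    KeepsPrefix k d S t.level p β := by
  rcases h with ⟨j, p₁, x₁, p₂, x₂, -, -, rfl, hα, -, -, rfl, hkeep⟩ |
    ⟨p₁, x₁, p₂, x₂, rfl, hα, -, -, hkeep⟩ | ⟨p₁, x₁, p₂, x₂, rfl, hα, hβ, -, -⟩ <;>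
    obtain ⟨rfl, rfl, rfl⟩ := Vert.node.inj hα <;> simp only [Tag.level]
  · exact ⟨_, _, _, rfl, .inl (by simp), fun l hl => (hkeep l (by omega) (by omega)).symm⟩
  · exact ⟨_, _, _, rfl, .inl (by simp), fun l hl => (hkeep l (by omega)).symm⟩
  · exact ⟨_, _, _, rfl, .inr hβ, fun l hl => by omega⟩

lemma VecE.keepsPrefix (h : VecE k d S (.node t p x) β) : KeepsPrefix k d S t.level p β := by
  obtain ⟨j, p₁, x₁, p₂, x₂, -, -, hα, rfl, -, -, rfl, hkeep⟩ := h
  obtain ⟨rfl, rfl, rfl⟩ := Vert.node.inj hα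
  refine ⟨_, _, _, rfl, .inl le_rfl, fun l hl => ?_⟩
  simp only [Tag.level] at hl
  rcases hkeep with hkeep | hkeep <;> exact hkeep l (by omega)

lemma VecE.keepsPrefix_symm (h : VecE k d S β (.node t p x)) :
    KeepsPrefix k d S t.level p β := by
  obtain ⟨j, p₁, x₁, p₂, x₂, -, -, rfl, hα, -, -, rfl, hkeep⟩ := h
  obtain ⟨rfl, rfl, rfl⟩ := Vert.node.inj hα
  refine ⟨_, _, _, rfl, .inl le_rfl, fun l hl => ?_⟩
  simp only [Tag.level] at hl
  rcases hkeep with hkeep | hkeep <;> exact (hkeep l (by omega)).symm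

lemma CoordE.keepsPrefix (h : CoordE k d S (.node t p x) β) :
    KeepsPrefix k d S t.level p β := by
  obtain ⟨t₁, t₂, p₁, x₁, x₂, hα, rfl, hlevel⟩ := h.exists_level_eq
  obtain ⟨rfl, rfl, rfl⟩ := Vert.node.inj hα
  exact ⟨_, _, _, rfl, .inl hlevel.le, fun _ _ => rfl⟩

lemma ABack.keepsPrefix (h : ABack k d S (.node t p x) β) :
    KeepsPrefix k d S t.level p β := by
  rcases h with ⟨j, t₁, p₁, x₁, p₂, x₂, hmem, -, hα, rfl, hkeep⟩ |
    ⟨j, p₁, x₁, p₂, x₂, hmem, -, hα, rfl, hkeep⟩ |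
    ⟨j, p₁, x₁, p₂, x₂, -, hmem, hα, rfl, -⟩ <;>
    obtain ⟨rfl, rfl, rfl⟩ := Vert.node.inj hα
  · have hj : t.level = j := hmem.elim level_eq_of_node_mem_setL level_eq_of_node_mem_setL'
    exact ⟨_, _, _, rfl, .inl hj.ge, fun l hl => hkeep l (by omega)⟩
  · have hj := (bounds_of_mem_setA hmem).1
    exact ⟨_, _, _, rfl, .inl hj, fun l hl => hkeep l (by simp only [Tag.level] at hl; omega)⟩
  · have hj := (bounds_of_mem_setA hmem).2
    exact ⟨_, _, _, rfl, .inl hj, fun l hl => by simp only [Tag.level] at hl; omega⟩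

lemma SwapE.keepsSuffix (h : SwapE k d S α (.node t p x)) :
    KeepsSuffix k d S t.level p α := by
  rcases h with ⟨j, p₁, x₁, p₂, x₂, hj₁, hj₂, rfl, hβ, hα, -, rfl, hkeep⟩ |
    ⟨p₁, x₁, p₂, x₂, rfl, hβ, hα, -, hkeep⟩ | ⟨p₁, x₁, p₂, x₂, rfl, hβ, -, -, hkeep⟩ <;>
    obtain ⟨rfl, rfl, rfl⟩ := Vert.node.inj hβ <;> simp only [Tag.level]
  · exact ⟨_, _, _, rfl, .inr (by simpa using hα),
      fun l hl => (hkeep l (by omega) (by omega)).symm⟩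
  · exact ⟨_, _, _, rfl, .inr hα, fun l hl => (hkeep l (by omega)).symm⟩
  · exact ⟨_, _, _, rfl, .inl (by simp), fun l hl => (hkeep l (by omega)).symm⟩

lemma SwapE.keepsSuffix_symm (h : SwapE k d S (.node t p x) α) :
    KeepsSuffix k d S t.level p α := by
  rcases h with ⟨j, p₁, x₁, p₂, x₂, hj₁, hj₂, hβ, rfl, -, -, rfl, hkeep⟩ |
    ⟨p₁, x₁, p₂, x₂, hβ, rfl, -, -, hkeep⟩ | ⟨p₁, x₁, p₂, x₂, hβ, rfl, -, hα, hkeep⟩ <;>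
    obtain ⟨rfl, rfl, rfl⟩ := Vert.node.inj hβ <;> simp only [Tag.level]
  · exact ⟨_, _, _, rfl, .inl (by simp), fun l hl => hkeep l (by omega) (by omega)⟩
  · exact ⟨_, _, _, rfl, .inl (by simp), fun l hl => hkeep l (by omega)⟩
  · exact ⟨_, _, _, rfl, .inr (by simpa using hα), fun l hl => hkeep l (by omega)⟩

lemma VecE.keepsSuffix (h : VecE k d S α (.node t p x)) : KeepsSuffix k d S t.level p α := by
  obtain ⟨j, p₁, x₁, p₂, x₂, hj₁, hj₂, rfl, hβ, -, -, rfl, hkeep⟩ := h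
  obtain ⟨rfl, rfl, rfl⟩ := Vert.node.inj hβ
  refine ⟨_, _, _, rfl, .inl le_rfl, fun l hl => ?_⟩
  simp only [Tag.level] at hl
  rcases hkeep with hkeep | hkeep <;> exact (hkeep l (by omega)).symm

lemma VecE.keepsSuffix_symm (h : VecE k d S (.node t p x) α) :
    KeepsSuffix k d S t.level p α := by
  obtain ⟨j, p₁, x₁, p₂, x₂, hj₁, hj₂, hβ, rfl, -, -, rfl, hkeep⟩ := h
  obtain ⟨rfl, rfl, rfl⟩ := Vert.node.inj hβ
  refine ⟨_, _, _, rfl, .inl le_rfl, fun l hl => ?_⟩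
  simp only [Tag.level] at hl
  rcases hkeep with hkeep | hkeep <;> exact hkeep l (by omega)

lemma CoordE.keepsSuffix (h : CoordE k d S α (.node t p x)) :
    KeepsSuffix k d S t.level p α := by
  obtain ⟨t₁, t₂, p₁, x₁, x₂, rfl, hβ, hlevel⟩ := h.exists_level_eq
  obtain ⟨rfl, rfl, rfl⟩ := Vert.node.inj hβ
  exact ⟨_, _, _, rfl, .inl hlevel.le, fun _ _ => rfl⟩

lemma BBack.keepsSuffix (h : BBack k d S α (.node t p x)) :
    KeepsSuffix k d S t.level p α := by
  rcases h with ⟨j, t₁, p₁, x₁, p₂, x₂, hB, hmem, rfl, hβ, hkeep⟩ |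
    ⟨j, p₁, x₁, p₂, x₂, -, hmem, rfl, hβ, hkeep⟩ |
    ⟨j, p₁, x₁, p₂, x₂, hmem, -, rfl, hβ, -⟩ <;>
    obtain ⟨rfl, rfl, rfl⟩ := Vert.node.inj hβ
  · have hj : t.level = j := hmem.elim level_eq_of_node_mem_setL level_eq_of_node_mem_setL'
    have hjk := (bounds_of_mem_setB hB).2
    exact ⟨_, _, _, rfl, .inl hj.le, fun l hl => hkeep l (by omega)⟩
  · have hj := (bounds_of_mem_setB hmem).2
    exact ⟨_, _, _, rfl, .inl hj,
      fun l hl => (hkeep l (by simp only [Tag.level] at hl; omega)).symm⟩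
  · have hj := (bounds_of_mem_setB hmem).1
    exact ⟨_, _, _, rfl, .inl hj, fun l hl => by simp only [Tag.level] at hl; omega⟩

lemma Adj.keepsPrefix (h : Adj k d S (.node t p x) β)
    (hα : Vert.node t p x ∉ setBall k d S) (hβ : β ∉ setBall k d S)
    (hu : β ≠ .uu) (hv : β ≠ .vv) : KeepsPrefix k d S t.level p β := by
  rcases h with h | h | h | h | h | h | h | ⟨j, -, -, hB, -⟩ | h
  · exact h.keepsPrefix
  · exact h.keepsPrefix_symm
  · exact h.keepsPrefix
  · exact h.keepsPrefix_symm
  · exact h.keepsPrefix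
  · exact h.keepsPrefix
  · exact (h.mem_setBall.elim hα hβ).elim
  · exact absurd (Set.mem_iUnion.2 ⟨j, hB⟩) hα
  · rcases h.incident_uu_or_vv with h | h | h | h <;> simp_all

lemma Adj.keepsSuffix (h : Adj k d S α (.node t p x))
    (hα : α ∉ setAall k d S) (hβ : Vert.node t p x ∉ setAall k d S)
    (hu : α ≠ .uu) (hv : α ≠ .vv) : KeepsSuffix k d S t.level p α := by
  rcases h with h | h | h | h | h | h | h | ⟨j, -, -, -, hA⟩ | h
  · exact h.keepsSuffix
  · exact h.keepsSuffix_symm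
  · exact h.keepsSuffix
  · exact h.keepsSuffix_symm
  · exact h.keepsSuffix
  · exact (h.mem_setAall.elim hα hβ).elim
  · exact h.keepsSuffix
  · exact absurd (Set.mem_iUnion.2 ⟨j, hA⟩) hβ
  · rcases h.incident_uu_or_vv with h | h | h | h <;> simp_all

end Edges

def BelowWithPrefix (k d : ℕ) (a : Fin k → Vec d) (i : ℕ) (w : Vert k d) : Prop :=
  ∃ t p x, w = .node t p x ∧ t.level < i ∧ ∀ j : Fin k, (j : ℕ) < k - i → p j = some (a j)

def AboveWithSuffix (k d : ℕ) (a : Fin k → Vec d) (i : ℕ) (w : Vert k d) : Prop :=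
  ∃ t p x, w = .node t p x ∧ i < t.level ∧
    ∀ j : Fin k, k - i + 2 ≤ (j : ℕ) → p j = some (a j)

section Invariants

variable {k d : ℕ} {S : Finset (Vec d)} {a : Fin k → Vec d} {i : ℕ} {α β : Vert k d}

lemma BelowWithPrefix.not_mem_setL (hα : BelowWithPrefix k d a i α) : α ∉ setL k d S i := by
  rintro hmem
  obtain ⟨t, p, x, rfl, hlt, -⟩ := hα
  exact hlt.ne (level_eq_of_node_mem_setL hmem)

lemma AboveWithSuffix.not_mem_setL (hβ : AboveWithSuffix k d a i β) : β ∉ setL k d S i := by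
  rintro hmem
  obtain ⟨t, p, x, rfl, hlt, -⟩ := hβ
  exact hlt.ne' (level_eq_of_node_mem_setL hmem)

lemma BelowWithPrefix.step (hα : BelowWithPrefix k d a i α) (h : Adj k d S α β)
    (hαB : α ∉ setBall k d S) (hβB : β ∉ setBall k d S) (hu : β ≠ .uu) (hv : β ≠ .vv) :
    BelowWithPrefix k d a i β ∨ β ∈ setL k d S i ∧
      ∃ p x, β = .node (.L i) p x ∧ ∀ j : Fin k, (j : ℕ) < k - i → p j = some (a j) := by
  obtain ⟨t, p, x, rfl, hlt, hpre⟩ := hα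
  obtain ⟨t', p', x', rfl, hlevel, hkeep⟩ := h.keepsPrefix hαB hβB hu hv
  have hpre' : ∀ j : Fin k, (j : ℕ) < k - i → p' j = some (a j) :=
    fun j hj => (hkeep j (by omega)).trans (hpre j hj)
  rcases hlevel with hle | hL
  · exact .inl ⟨_, _, _, rfl, by omega, hpre'⟩
  obtain rfl := eq_L_of_node_mem_setL hL
  rcases (by omega : t.level + 1 < i ∨ t.level + 1 = i) with hlt' | rfl
  · exact .inl ⟨_, _, _, rfl, hlt', hpre'⟩
  · exact .inr ⟨hL, _, _, rfl, hpre'⟩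

lemma AboveWithSuffix.step (hβ : AboveWithSuffix k d a i β) (h : Adj k d S α β)
    (hαA : α ∉ setAall k d S) (hβA : β ∉ setAall k d S) (hu : α ≠ .uu) (hv : α ≠ .vv) :
    AboveWithSuffix k d a i α ∨ α ∈ setL k d S i ∧
      ∃ p x, α = .node (.L i) p x ∧ ∀ j : Fin k, k - i + 2 ≤ (j : ℕ) → p j = some (a j) := by
  obtain ⟨t, p, x, rfl, hlt, hsuf⟩ := hβ
  obtain ⟨t', p', x', rfl, hlevel, hkeep⟩ := h.keepsSuffix hαA hβA hu hv
  have hsuf' : ∀ j : Fin k, k - i + 2 ≤ (j : ℕ) → p' j = some (a j) :=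
    fun j hj => (hkeep j (by omega)).trans (hsuf j hj)
  rcases hlevel with hle | hL
  · exact .inl ⟨_, _, _, rfl, by omega, hsuf'⟩
  obtain rfl := eq_L_of_node_mem_setL hL
  rcases (by omega : i < t.level - 1 ∨ t.level - 1 = i) with hlt' | rfl
  · exact .inl ⟨_, _, _, rfl, hlt', hsuf'⟩
  · exact .inr ⟨hL, _, _, rfl, hsuf'⟩

end Invariants

theorem first_last_visit_prefix_suffix_general (k d : ℕ) (hd : 1 ≤ d)
    (S : Finset (Vec d)) (a : Fin k → Vec d)
    (P : ℕ → Vert k d) (n : ℕ) (hP : IsWalk (Adj k d S) P n)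
    (h0 : P 0 = Vert.node (Tag.L 1)
      (fun j => if (j : ℕ) < k - 1 then some (a j) else none) (fun _ => ⟨0, hd⟩))
    (hn : P n = Vert.node (Tag.L (k + 1))
      (fun j => if 1 ≤ (j : ℕ) then some (a j) else none) (fun _ => ⟨0, hd⟩))
    (huv : ∀ t ≤ n, P t ≠ Vert.uu ∧ P t ≠ Vert.vv)
    (i : ℕ) (hi2 : 2 ≤ i) (hik : i ≤ k) :
    (∀ t, FirstVisit k d S P n i t → (∀ s ≤ t, P s ∉ setBall k d S) →
      ∃ p x, P t = Vert.node (Tag.L i) p x ∧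
        ∀ j : Fin k, (j : ℕ) < k - i → p j = some (a j)) ∧
    (∀ t, LastVisit k d S P n i t → (∀ s, t ≤ s → s ≤ n → P s ∉ setAall k d S) →
      ∃ p x, P t = Vert.node (Tag.L i) p x ∧
        ∀ j : Fin k, k - i + 2 ≤ (j : ℕ) → p j = some (a j)) := by
  refine ⟨fun t ⟨htn, ht, hfirst⟩ hB => ?_, fun t ⟨htn, ht, hlast⟩ hA => ?_⟩
  · have hstart : BelowWithPrefix k d a i (P 0) :=
      ⟨_, _, _, h0, hi2, fun j hj => if_pos (by omega)⟩
    refine first_hit_of_invariant (Q := fun w => ∃ p x, w = .node (.L i) p x ∧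
      ∀ j : Fin k, (j : ℕ) < k - i → p j = some (a j)) hstart (fun _ hw => hw.not_mem_setL)
      (fun s hs hw => ?_) hfirst ht
    have hsn : s + 1 ≤ n := by omega
    exact hw.step (hP s hsn) (hB s hs.le) (hB (s + 1) hs) (huv _ hsn).1 (huv _ hsn).2
  · have hend : AboveWithSuffix k d a i (P n) :=
      ⟨_, _, _, hn, by simp only [Tag.level]; omega, fun j hj => if_pos (by omega)⟩
    refine last_hit_of_invariant (Q := fun w => ∃ p x, w = .node (.L i) p x ∧
      ∀ j : Fin k, k - i + 2 ≤ (j : ℕ) → p j = some (a j)) hend (fun _ hw => hw.not_mem_setL)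
      (fun s hts hsn hw => ?_) hlast ht htn
    exact hw.step (hP s hsn) (hA s hts hsn.le) (hA (s + 1) (by omega) hsn)
      (huv s hsn.le).1 (huv s hsn.le).2

/-- **Lemma 5.4.**  Let `a_1, …, a_k ∈ S`, let
`α = (a_1, …, a_{k-1}) ∈ L_1` and `β = (a_2, …, a_k) ∈ L_{k+1}` (here `a j` denotes the
vector with 1-based index `j+1`), and let `P` be a directed path in `G` from `α` to `β`
containing neither `u`, nor `v`, nor any `ba`-type back edge.  Fix `i` with
`2 ≤ i ≤ k`, and let `γ₁`, `γ₂` be the first and last vertices of `L_i` that `P`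
visits; let `P₁` be the subpath of `P` from `α` to `γ₁` and `P₂` the subpath from `γ₂`
to `β`.  If `P₁` does not visit `B`, then `γ₁` has the vector prefix
`(a_1, …, a_{k-i})`, and if `P₂` does not visit `A`, then `γ₂` has the suffix
`(a_{k-i+3}, …, a_k, x)` for some coordinate array `x`. -/
theorem first_last_visit_prefix_suffix (k d : ℕ) (hk : 5 ≤ k) (hd : 1 ≤ d)
    (S : Finset (Vec d)) (hone : ones d ∈ S)
    (a : Fin k → Vec d) (ha : ∀ j, a j ∈ S)
    (P : ℕ → Vert k d) (n : ℕ) (hP : IsWalk (Adj k d S) P n)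
    (h0 : P 0 = Vert.node (Tag.L 1)
      (fun j => if (j : ℕ) < k - 1 then some (a j) else none) (fun _ => ⟨0, hd⟩))
    (hn : P n = Vert.node (Tag.L (k + 1))
      (fun j => if 1 ≤ (j : ℕ) then some (a j) else none) (fun _ => ⟨0, hd⟩))
    (huv : ∀ t ≤ n, P t ≠ Vert.uu ∧ P t ≠ Vert.vv)
    (hba : ∀ t, t < n → ¬ BABack k d S (P t) (P (t + 1)))
    (i : ℕ) (hi2 : 2 ≤ i) (hik : i ≤ k) :
    (∀ t, FirstVisit k d S P n i t → (∀ s ≤ t, P s ∉ setBall k d S) →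
      ∃ p x, P t = Vert.node (Tag.L i) p x ∧
        ∀ j : Fin k, (j : ℕ) < k - i → p j = some (a j)) ∧
    (∀ t, LastVisit k d S P n i t → (∀ s, t ≤ s → s ≤ n → P s ∉ setAall k d S) →
      ∃ p x, P t = Vert.node (Tag.L i) p x ∧
        ∀ j : Fin k, k - i + 2 ≤ (j : ℕ) → p j = some (a j)) :=
  first_last_visit_prefix_suffix_general k d hd S a P n hP h0 hn huv i hi2 hik

end DiamLB
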